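/- Let B be a simple bipartite graph with bipartition V(B) = W ⊎ U, G its half-square, D = (T, β_D) a nice tree decomposition of B, and D' = (T, β_{D'}) the derived decomposition of G. Let s ∈ U, K = N_B(s) the corresponding special clique, and let 𝒞 be a set of pairwise vertex-disjoint triangles of G with all vertices in K. Then there is a set 𝒞' of pairwise vertex-disjoint triangles of G with all vertices in K such that |𝒞'| = |𝒞|, V(𝒞') = V(𝒞), and for every node t of T, at most 4 edges of E(𝒞') have one endpoint in Fake(t) ∩ K and the other endpoint in V(G) ∖ γ_{D'}(t). -/

import Mathlib

open SimpleGraph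

section Defs

variable {V : Type*} {ι : Type*}

/-- `W, U` is a bipartition of the simple graph `B`. -/
def IsBipartition (B : SimpleGraph V) (W U : Set V) : Prop :=
  (∀ v, v ∈ W ∨ v ∈ U) ∧ (∀ v, ¬(v ∈ W ∧ v ∈ U)) ∧
    ∀ ⦃a b⦄, B.Adj a b → (a ∈ W ∧ b ∈ U) ∨ (a ∈ U ∧ b ∈ W)

/-- The half-square of `B` on side `W`: two distinct vertices of `W` are adjacent
iff they have a common neighbor in `B`. -/
def halfSquare (B : SimpleGraph V) (W : Set V) : SimpleGraph V where
  Adj a b := a ≠ b ∧ a ∈ W ∧ b ∈ W ∧ ∃ s, B.Adj a s ∧ B.Adj b s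
  symm := by
    constructor
    rintro a b ⟨hne, ha, hb, s, h1, h2⟩
    exact ⟨hne.symm, hb, ha, s, h2, h1⟩
  loopless := by constructor; rintro a ⟨hne, _⟩; exact hne rfl

/-- Tree decomposition of the graph `H` with vertex set `S`, over the tree `T`. -/
structure IsTreeDecompOn (H : SimpleGraph V) (S : Set V) (T : SimpleGraph ι)
    (β : ι → Set V) : Prop where
  covers : ∀ v ∈ S, ∃ t, v ∈ β t
  edge_mem : ∀ ⦃u v⦄, H.Adj u v → ∃ t, u ∈ β t ∧ v ∈ β t
  conn : ∀ v ∈ S, (T.induce {t | v ∈ β t}).Connected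

/-- `t'` is a descendant of `t` (inclusively) in the tree `T` rooted at `r`:
`t` lies on every path from `t'` to the root. -/
def Desc (T : SimpleGraph ι) (r : ι) (t t' : ι) : Prop :=
  ∀ p : T.Walk t' r, p.IsPath → t ∈ p.support

/-- `γ(t)`: union of the bags of `t` and of all its descendants. -/
def gammaSet (T : SimpleGraph ι) (r : ι) (β : ι → Set V) (t : ι) : Set V :=
  ⋃ t' ∈ {t' | Desc T r t t'}, β t'

/-- The bag of the derived decomposition. -/
def derivedBag (B : SimpleGraph V) (W U : Set V) (T : SimpleGraph ι) (r : ι)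
    (β : ι → Set V) (t : ι) : Set V :=
  (β t ∩ W) ∪ ⋃ s ∈ β t ∩ U, B.neighborSet s ∩ gammaSet T r β t

def originalSet (B : SimpleGraph V) (W U : Set V) (T : SimpleGraph ι) (r : ι)
    (β : ι → Set V) (t : ι) : Set V :=
  β t ∩ derivedBag B W U T r β t

def fakeSet (B : SimpleGraph V) (W U : Set V) (T : SimpleGraph ι) (r : ι)
    (β : ι → Set V) (t : ι) : Set V :=
  derivedBag B W U T r β t \ β t

def cliquesAt (B : SimpleGraph V) (U : Set V) (β : ι → Set V) (t : ι) : Set (Set V) :=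
  {K | ∃ s ∈ β t ∩ U, K = B.neighborSet s}

def IsChild (T : SimpleGraph ι) (r : ι) (t t' : ι) : Prop :=
  T.Adj t t' ∧ Desc T r t t'

def IsLeafNode (T : SimpleGraph ι) (r : ι) (β : ι → Set V) (t : ι) : Prop :=
  (∀ t', ¬ IsChild T r t t') ∧ β t = ∅

def IsForgetNode (T : SimpleGraph ι) (r : ι) (β : ι → Set V) (w : V) (t : ι) : Prop :=
  ∃ t', IsChild T r t t' ∧ (∀ t'', IsChild T r t t'' → t'' = t') ∧
    w ∈ β t' ∧ β t = β t' \ {w}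

def IsIntroduceNode (T : SimpleGraph ι) (r : ι) (β : ι → Set V) (w : V) (t : ι) : Prop :=
  ∃ t', IsChild T r t t' ∧ (∀ t'', IsChild T r t t'' → t'' = t') ∧
    w ∈ β t ∧ β t \ {w} = β t'

def IsJoinNode (T : SimpleGraph ι) (r : ι) (β : ι → Set V) (t : ι) : Prop :=
  ∃ t₁ t₂, t₁ ≠ t₂ ∧ IsChild T r t t₁ ∧ IsChild T r t t₂ ∧
    (∀ t'', IsChild T r t t'' → t'' = t₁ ∨ t'' = t₂) ∧ β t = β t₁ ∧ β t = β t₂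

/-- A nice (rooted) tree decomposition. -/
def IsNice (T : SimpleGraph ι) (r : ι) (β : ι → Set V) : Prop :=
  β r = ∅ ∧ ∀ t, IsLeafNode T r β t ∨ (∃ w, IsForgetNode T r β w t) ∨
    (∃ w, IsIntroduceNode T r β w t) ∨ IsJoinNode T r β t

/-- `E(X)`: edges of `G` with both endpoints in `X`. -/
def edgesIn (G : SimpleGraph V) (X : Set V) : Set (Sym2 V) :=
  {e | e ∈ G.edgeSet ∧ ∀ x ∈ e, x ∈ X}

end Defs


/-!
For a node `t`, every counted edge leaves the set `γ(t) \ β(t)` of vertices forgotten below `t`: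
a fake vertex of `t` lies in it, while a vertex of `W` outside `γ_{D'}(t)` is not even in `γ(t)`.
Because the subtree of nodes whose bags contain a vertex is connected, these sets form a laminar
family as `t` runs over the tree. Order the vertices of the triangles so that every member of the
family becomes an interval, and regroup them into consecutive triples. An interval meets, without
containing, at most two triples (the ones at its ends), and a triple split `1 + 2` has only two
edges across the split: at most four edges in total.
-/

open Function

section Descendants

variable {ι : Type*} {T : SimpleGraph ι} {r t t' t'' : ι}

theorem desc_of_mem_support (hT : T.IsTree) {p : T.Walk t' r} (hp : p.IsPath)
    (ht : t ∈ p.support) : Desc T r t t' :=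
  fun _ hq => (hT.existsUnique_path t' r).unique hq hp ▸ ht

theorem Desc.trans (h : Desc T r t t') (h' : Desc T r t' t'') : Desc T r t t'' := by
  classical
  intro p hp
  have ht' := h' p hp
  exact p.support_dropUntil_subset_support ht' (h _ (hp.dropUntil ht'))

theorem Desc.antisymm (hT : T.IsTree) (h : Desc T r t t') (h' : Desc T r t' t) : t = t' := by
  classical
  obtain ⟨p, hp, -⟩ := hT.existsUnique_path t r
  have ht' := h' p hp
  have hq := hp.dropUntil ht'
  have ht := h _ hq
  -- the part of `p` after `t'` is again a path from `t` to the root, so it is all of `p`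
  have hpq : (p.dropUntil t' ht').dropUntil t ht = p :=
    (hT.existsUnique_path t r).unique (hq.dropUntil ht) hp
  have hlen := congrArg Walk.length (p.take_spec ht')
  have hle := (p.dropUntil t' ht').length_dropUntil_le_length ht
  rw [hpq] at hle
  rw [Walk.length_append] at hlen
  exact Walk.eq_of_length_eq_zero (p := p.takeUntil t' ht') (by omega)

theorem desc_total_of_desc (hT : T.IsTree) {u : ι} (h : Desc T r t u) (h' : Desc T r t' u) :
    Desc T r t t' ∨ Desc T r t' t := by
  obtain ⟨p, hp, -⟩ := hT.existsUnique_path u r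
  have ht := h p hp
  have ht' := h' p hp
  clear h h'
  induction p with
  | nil =>
    simp only [Walk.support_nil, List.mem_singleton] at ht ht'
    subst ht ht'
    exact Or.inl fun q _ => q.start_mem_support
  | @cons u _ _ _ _ ih =>
    by_cases hu : t = u
    · subst hu
      exact Or.inr (desc_of_mem_support hT hp ht')
    by_cases hu' : t' = u
    · subst hu'
      exact Or.inl (desc_of_mem_support hT hp ht)
    exact ih hp.of_cons (by simpa [hu] using ht) (by simpa [hu'] using ht')

theorem desc_of_induce_connected {A : Set ι} (hA : (T.induce A).Connected) (ht : t ∉ A)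
    (ht' : t' ∈ A) (ht'' : t'' ∈ A) (h : Desc T r t t') : Desc T r t t'' := by
  classical
  intro p hp
  obtain ⟨w⟩ := hA.preconnected ⟨t', ht'⟩ ⟨t'', ht''⟩
  let w' := w.map (Embedding.induce A).toHom
  have hw' : ∀ s ∈ w'.support, s ∈ A := by
    intro s hs
    have hmap := Walk.support_map (Embedding.induce A).toHom w
    rw [hmap, List.mem_map] at hs
    obtain ⟨⟨s, hs⟩, -, rfl⟩ := hs
    exact hs
  have := (w'.append p).support_bypass_subset_support (h _ (w'.append p).bypass_isPath)
  exact ((Walk.mem_support_append_iff _ _).1 this).resolve_left fun h => ht (hw' _ h)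

end Descendants

def IsLaminar {P : Type*} (F : Set (Set P)) : Prop :=
  ∀ A ∈ F, ∀ A' ∈ F, A ⊆ A' ∨ A' ⊆ A ∨ Disjoint A A'

theorem IsLaminar.preimage {P Q : Type*} {F : Set (Set P)} (hF : IsLaminar F) (f : Q → P) :
    IsLaminar ((f ⁻¹' ·) '' F) := by
  rintro _ ⟨A, hA, rfl⟩ _ ⟨A', hA', rfl⟩
  rcases hF A hA A' hA' with h | h | h
  exacts [Or.inl (Set.preimage_mono h), Or.inr (Or.inl (Set.preimage_mono h)),
    Or.inr (Or.inr (h.preimage f))]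

section Forgotten

variable {V ι : Type*} {T : SimpleGraph ι} {r t t' : ι} {β : ι → Set V}

theorem gammaSet_diff_subset (hT : T.IsTree)
    (hconn : ∀ v, (T.induce {t | v ∈ β t}).Connected) (h : Desc T r t t') :
    gammaSet T r β t' \ β t' ⊆ gammaSet T r β t \ β t := by
  rintro v ⟨hv, hvt'⟩
  obtain ⟨s, hs, hvs⟩ := Set.mem_iUnion₂.1 hv
  refine ⟨Set.mem_iUnion₂.2 ⟨s, h.trans hs, hvs⟩, fun hvt => hvt' ?_⟩
  have : Desc T r t' t := desc_of_induce_connected (hconn v) hvt' hvs hvt hs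
  rwa [← Desc.antisymm hT h this]

theorem isLaminar_gammaSet_diff (hT : T.IsTree)
    (hconn : ∀ v, (T.induce {t | v ∈ β t}).Connected) :
    IsLaminar (Set.range fun t => gammaSet T r β t \ β t) := by
  rintro _ ⟨t, rfl⟩ _ ⟨t', rfl⟩
  by_cases hdisj : Disjoint (gammaSet T r β t \ β t) (gammaSet T r β t' \ β t')
  · exact Or.inr (Or.inr hdisj)
  obtain ⟨v, ⟨hv, -⟩, hv', hvt'⟩ := Set.not_disjoint_iff.1 hdisj
  obtain ⟨s, hs, hvs⟩ := Set.mem_iUnion₂.1 hv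
  obtain ⟨s', hs', hvs'⟩ := Set.mem_iUnion₂.1 hv'
  rcases desc_total_of_desc hT hs (desc_of_induce_connected (hconn v) hvt' hvs' hvs hs') with h | h
  · exact Or.inr (Or.inl (gammaSet_diff_subset hT hconn h))
  · exact Or.inl (gammaSet_diff_subset hT hconn h)

theorem mem_gammaSet_diff_of_mem_fakeSet {B : SimpleGraph V} {W U : Set V} {v : V}
    (hv : v ∈ fakeSet B W U T r β t) : v ∈ gammaSet T r β t \ β t := by
  obtain ⟨hv | hv, hvt⟩ := hv
  · exact absurd hv.1 hvt
  · obtain ⟨s, -, -, hvγ⟩ := Set.mem_iUnion₂.1 hv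
    exact ⟨hvγ, hvt⟩

theorem gammaSet_inter_subset_gammaSet_derivedBag (B : SimpleGraph V) (W U : Set V) :
    gammaSet T r β t ∩ W ⊆ gammaSet T r (derivedBag B W U T r β) t := by
  rintro v ⟨hv, hvW⟩
  obtain ⟨s, hs, hvs⟩ := Set.mem_iUnion₂.1 hv
  exact Set.mem_iUnion₂.2 ⟨s, hs, Or.inl ⟨hvs, hvW⟩⟩

end Forgotten

section IntervalOrder

variable {P : Type*}

def IsIntervalBy {L : Type*} [LE L] (f : P → L) (A : Set P) : Prop :=
  ∀ ⦃a b v⦄, a ∈ A → b ∈ A → f a ≤ f v → f v ≤ f b → v ∈ A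

variable [Fintype P]

theorem exists_equiv_fin_le_iff {L : Type*} [LinearOrder L] (k : P → L) (hk : Injective k) :
    ∃ e : P ≃ Fin (Fintype.card P), ∀ a b, e a ≤ e b ↔ k a ≤ k b := by
  let _ := LinearOrder.lift' k hk
  exact ⟨(Fintype.orderIsoFinOfCardEq P rfl).symm.toEquiv,
    fun _ _ => (Fintype.orderIsoFinOfCardEq P rfl).symm.le_iff_le⟩

/-- Refine the preorder `e ∘ c` lexicographically by `e`. -/
theorem exists_equiv_le_lex (e : P ≃ Fin (Fintype.card P)) (c : P → P) :
    ∃ e' : P ≃ Fin (Fintype.card P),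
      ∀ a v, e' a ≤ e' v → e (c a) ≤ e (c v) ∧ (c a = c v → e a ≤ e v) := by
  let k : P → Fin (Fintype.card P) ×ₗ Fin (Fintype.card P) := fun v => toLex (e (c v), e v)
  obtain ⟨e', he'⟩ := exists_equiv_fin_le_iff k
    fun a b h => e.injective (congrArg (fun x => (ofLex x).2) h)
  refine ⟨e', fun a v h => ?_⟩
  have h := (he' a v).1 h
  simp only [k, Prod.Lex.toLex_le_toLex] at h
  rcases h with h | ⟨h, h'⟩
  · exact ⟨h.le, fun hc => absurd h (hc ▸ lt_irrefl _)⟩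
  · exact ⟨h.le, fun _ => h'⟩

theorem exists_equiv_isIntervalBy_insert {F : Set (Set P)} {M : Set P}
    (e : P ≃ Fin (Fintype.card P)) (he : ∀ A ∈ F, IsIntervalBy e A)
    (hM : ∀ A ∈ F, A ⊆ M ∨ M ⊆ A ∨ Disjoint A M) :
    ∃ e' : P ≃ Fin (Fintype.card P), ∀ A ∈ insert M F, IsIntervalBy e' A := by
  classical
  rcases M.eq_empty_or_nonempty with rfl | ⟨m, hm⟩
  · refine ⟨e, ?_⟩
    rintro A (rfl | hA)
    exacts [fun a _ _ ha => absurd ha (Set.notMem_empty a), he A hA]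
  -- move all of `M` to the position of `m`, keeping the order inside `M`
  let c : P → P := fun v => if v ∈ M then m else v
  have hcM : ∀ {v}, v ∈ M → c v = m := fun hv => if_pos hv
  have hcM' : ∀ {v}, v ∉ M → c v = v := fun hv => if_neg hv
  obtain ⟨e', hle⟩ := exists_equiv_le_lex e c
  have hinside : ∀ {a b v}, a ∈ M → b ∈ M → e' a ≤ e' v → e' v ≤ e' b →
      v ∈ M ∧ e a ≤ e v ∧ e v ≤ e b := by
    intro a b v ha hb hav hvb
    obtain ⟨h₁, h₁'⟩ := hle _ _ hav
    obtain ⟨h₂, h₂'⟩ := hle _ _ hvb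
    rw [hcM ha] at h₁ h₁'
    rw [hcM hb] at h₂ h₂'
    have hv : c v = m := e.injective (le_antisymm h₂ h₁)
    have hvM : v ∈ M := by_contra fun hvM => hvM (hcM' hvM ▸ hv ▸ hm)
    exact ⟨hvM, h₁' hv.symm, h₂' hv⟩
  -- a union of fibres of `c` is ordered by `e ∘ c`
  have hfibres : ∀ {A}, IsIntervalBy e A → (∀ v, c v ∈ A ↔ v ∈ A) → IsIntervalBy e' A :=
    fun hA hc a b v ha hb hav hvb =>
      (hc v).1 (hA ((hc a).2 ha) ((hc b).2 hb) (hle _ _ hav).1 (hle _ _ hvb).1)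
  refine ⟨e', ?_⟩
  rintro A (rfl | hA)
  · exact fun a b v ha hb hav hvb => (hinside ha hb hav hvb).1
  rcases hM A hA with hAM | hMA | hAM
  · intro a b v ha hb hav hvb
    obtain ⟨-, hav, hvb⟩ := hinside (hAM ha) (hAM hb) hav hvb
    exact he A hA ha hb hav hvb
  · refine hfibres (he A hA) fun v => ?_
    by_cases hv : v ∈ M
    · rw [hcM hv]
      exact iff_of_true (hMA hm) (hMA hv)
    · rw [hcM' hv]
  · refine hfibres (he A hA) fun v => ?_
    by_cases hv : v ∈ M
    · rw [hcM hv]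
      exact iff_of_false (Set.disjoint_right.1 hAM hm) (Set.disjoint_right.1 hAM hv)
    · rw [hcM' hv]

theorem IsLaminar.exists_equiv_fin {F : Set (Set P)} (hF : IsLaminar F) :
    ∃ e : P ≃ Fin (Fintype.card P), ∀ A ∈ F, IsIntervalBy e A := by
  induction F, F.toFinite using Set.Finite.induction_on with
  | empty => exact ⟨Fintype.equivFin P, by simp⟩
  | @insert M F _ _ ih =>
    obtain ⟨e, he⟩ := ih fun A hA A' hA' => hF A (.inr hA) A' (.inr hA')
    exact exists_equiv_isIntervalBy_insert e he fun A hA => hF A (.inr hA) M (.inl rfl)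

end IntervalOrder

section Triangles

variable {α V : Type*}

def tripleMap (x y z : α → V) (p : α × Fin 3) : V :=
  ![x p.1, y p.1, z p.1] p.2

/-- Position of slot `(i, k)` when the triangles are laid out one after another in the
order `σ`. -/
def slotIndex {m : ℕ} (σ : α ≃ Fin m) (p : α × Fin 3) : ℕ :=
  3 * σ p.1 + p.2

theorem tripleMap_eta (g : α × Fin 3 → V) :
    tripleMap (fun i => g (i, 0)) (fun i => g (i, 1)) (fun i => g (i, 2)) = g := by
  ext ⟨i, k⟩
  fin_cases k <;> rfl

theorem range_tripleMap_mk (x y z : α → V) (i : α) :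
    Set.range (fun k => tripleMap x y z (i, k)) = {x i, y i, z i} := by
  ext v
  simp only [Set.mem_range, Fin.exists_fin_succ, Fin.exists_fin_zero, tripleMap,
    Set.mem_insert_iff, Set.mem_singleton_iff]
  tauto

theorem range_tripleMap (x y z : α → V) :
    Set.range (tripleMap x y z) = ⋃ i, {x i, y i, z i} := by
  ext v
  simp only [Set.mem_iUnion, ← range_tripleMap_mk, Set.mem_range, Prod.exists]

theorem range_tripleMap_subset {x y z : α → V} {S : Set V}
    (h : ∀ i, x i ∈ S ∧ y i ∈ S ∧ z i ∈ S) : Set.range (tripleMap x y z) ⊆ S := by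
  rw [range_tripleMap]
  exact Set.iUnion_subset fun i => by simp [Set.insert_subset_iff, h i]

theorem tripleMap_injective {x y z : α → V} (hne : ∀ i, x i ≠ y i ∧ y i ≠ z i ∧ x i ≠ z i)
    (hdisj : ∀ i j, i ≠ j → Disjoint ({x i, y i, z i} : Set V) {x j, y j, z j}) :
    Injective (tripleMap x y z) := by
  rintro ⟨i, k⟩ ⟨j, l⟩ h
  obtain rfl : i = j := by
    by_contra hij
    have := hdisj i j hij
    rw [← range_tripleMap_mk, ← range_tripleMap_mk, Set.disjoint_range_iff] at this
    exact this k l h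
  obtain ⟨h₁, h₂, h₃⟩ := hne i
  fin_cases k <;> fin_cases l <;> simp_all [tripleMap, eq_comm]

theorem disjoint_of_tripleMap_injective {x y z : α → V} (h : Injective (tripleMap x y z))
    (i j : α) (hij : i ≠ j) : Disjoint ({x i, y i, z i} : Set V) {x j, y j, z j} := by
  rw [← range_tripleMap_mk, ← range_tripleMap_mk, Set.disjoint_range_iff]
  exact fun k l hkl => hij (congrArg Prod.fst (h hkl))

theorem triangle_of_tripleMap_injective {G : SimpleGraph V} {K : Set V} {x y z : α → V}
    (h : Injective (tripleMap x y z)) (hK : Set.range (tripleMap x y z) ⊆ K)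
    (hG : G.IsClique (Set.range (tripleMap x y z))) (i : α) :
    x i ≠ y i ∧ y i ≠ z i ∧ x i ≠ z i ∧ x i ∈ K ∧ y i ∈ K ∧ z i ∈ K ∧
      G.Adj (x i) (y i) ∧ G.Adj (y i) (z i) ∧ G.Adj (x i) (z i) := by
  have hne : ∀ k l : Fin 3, k ≠ l → tripleMap x y z (i, k) ≠ tripleMap x y z (i, l) :=
    fun k l hkl => h.ne (by simpa using hkl)
  have hmem : ∀ k, tripleMap x y z (i, k) ∈ Set.range (tripleMap x y z) := fun k => ⟨_, rfl⟩
  exact ⟨hne 0 1 (by decide), hne 1 2 (by decide), hne 0 2 (by decide),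
    hK (hmem 0), hK (hmem 1), hK (hmem 2), hG (hmem 0) (hmem 1) (hne 0 1 (by decide)),
    hG (hmem 1) (hmem 2) (hne 1 2 (by decide)), hG (hmem 0) (hmem 2) (hne 0 2 (by decide))⟩

theorem IsLaminar.exists_perm_isIntervalBy_slotIndex [Fintype α] {m : ℕ}
    {F : Set (Set (α × Fin 3))} (hF : IsLaminar F) (σ : α ≃ Fin m) :
    ∃ π : Equiv.Perm (α × Fin 3), ∀ A ∈ F, IsIntervalBy (slotIndex σ) (π ⁻¹' A) := by
  obtain ⟨e, he⟩ := hF.exists_equiv_fin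
  have hcard : m * 3 = Fintype.card (α × Fin 3) := by simp [Fintype.card_congr σ]
  let κ : α × Fin 3 ≃ Fin (Fintype.card (α × Fin 3)) :=
    (σ.prodCongr (Equiv.refl _)).trans (finProdFinEquiv.trans (finCongr hcard))
  have hκ : ∀ p, (κ p : ℕ) = slotIndex σ p := fun p => by
    simp [κ, slotIndex, add_comm]
  refine ⟨κ.trans e.symm, fun A hA a b v ha hb hav hvb => he A hA ha hb ?_ ?_⟩ <;>
    simpa [Fin.le_def, hκ]

end Triangles

theorem Finset.card_le_two_of_forall_not_lt_lt {L : Type*} [LinearOrder L] (s : Finset L)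
    (h : ∀ a ∈ s, ∀ b ∈ s, ∀ c ∈ s, a < b → ¬b < c) : s.card ≤ 2 := by
  rcases s.eq_empty_or_nonempty with rfl | hs
  · simp
  refine (Finset.card_le_card (t := {s.min' hs, s.max' hs}) fun b hb => ?_).trans
    Finset.card_le_two
  by_contra hb'
  simp only [Finset.mem_insert, Finset.mem_singleton, not_or] at hb'
  exact h _ (s.min'_mem hs) b hb _ (s.max'_mem hs) ((s.min'_le b hb).lt_of_ne' hb'.1)
    ((s.le_max' b hb).lt_of_ne hb'.2)

theorem Nat.mul_le_two_of_add_eq_three {a b : ℕ} (h : a + b = 3) : a * b ≤ 2 := by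
  have : a ≤ 3 := by omega
  interval_cases a <;> omega

section Crossing

variable {α V : Type*} [Fintype α] {m : ℕ} (σ : α ≃ Fin m) {x y z : α → V} {X : Set V}

theorem card_filter_straddling_le_two [DecidablePred (· ∈ X)]
    (hX : IsIntervalBy (slotIndex σ) (tripleMap x y z ⁻¹' X)) :
    (Finset.univ.filter fun i =>
      (∃ k, tripleMap x y z (i, k) ∈ X) ∧ ∃ l, tripleMap x y z (i, l) ∉ X).card ≤ 2 := by
  rw [← Finset.card_image_of_injective _ σ.injective]
  refine Finset.card_le_two_of_forall_not_lt_lt _ ?_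
  simp only [Finset.mem_image, Finset.mem_filter, Finset.mem_univ, true_and]
  rintro _ ⟨i, ⟨⟨k, hk⟩, -⟩, rfl⟩ _ ⟨j, ⟨-, ⟨l, hl⟩⟩, rfl⟩ _ ⟨j', ⟨⟨k', hk'⟩, -⟩, rfl⟩
    hij hjj'
  -- a triangle strictly between two triangles meeting the interval `X` lies inside `X`
  rw [Fin.lt_def] at hij hjj'
  refine hl (hX hk hk' ?_ ?_) <;> simp only [slotIndex] <;> omega

theorem ncard_crossing_le_four (hX : IsIntervalBy (slotIndex σ) (tripleMap x y z ⁻¹' X)) :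
    {e | e ∈ (⋃ i, ({s(x i, y i), s(y i, z i), s(x i, z i)} : Set (Sym2 V))) ∧
      ∃ p q, e = s(p, q) ∧ p ∈ X ∧ q ∉ X}.ncard ≤ 4 := by
  classical
  set g := tripleMap x y z
  let S := Finset.univ.filter fun i => (∃ k, g (i, k) ∈ X) ∧ ∃ l, g (i, l) ∉ X
  let E : α → Finset (Sym2 V) := fun i =>
    ((Finset.univ.filter fun k => g (i, k) ∈ X) ×ˢ (Finset.univ.filter fun l => g (i, l) ∉ X)).image
      fun kl => s(g (i, kl.1), g (i, kl.2))
  have hsub : {e | e ∈ (⋃ i, ({s(x i, y i), s(y i, z i), s(x i, z i)} : Set (Sym2 V))) ∧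
      ∃ p q, e = s(p, q) ∧ p ∈ X ∧ q ∉ X} ⊆ S.biUnion E := by
    rintro _ ⟨he, p, q, rfl, hp, hq⟩
    obtain ⟨i, he⟩ := Set.mem_iUnion.1 he
    have hvert : ∀ w ∈ s(p, q), ∃ k, w = g (i, k) := by
      intro w hw
      rcases he with he | he | he <;> rw [he, Sym2.mem_iff] at hw <;> rcases hw with rfl | rfl
      exacts [⟨0, rfl⟩, ⟨1, rfl⟩, ⟨1, rfl⟩, ⟨2, rfl⟩, ⟨0, rfl⟩, ⟨2, rfl⟩]
    obtain ⟨k, rfl⟩ := hvert p (Sym2.mem_mk_left p q)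
    obtain ⟨l, rfl⟩ := hvert _ (Sym2.mem_mk_right _ q)
    simp only [Finset.coe_biUnion, Set.mem_iUnion, Finset.mem_coe]
    exact ⟨i, Finset.mem_filter.2 ⟨Finset.mem_univ _, ⟨k, hp⟩, l, hq⟩,
      Finset.mem_image.2 ⟨(k, l), by simp [hp, hq], rfl⟩⟩
  have hE : ∀ i ∈ S, (E i).card ≤ 2 := fun i _ => by
    refine Finset.card_image_le.trans ?_
    rw [Finset.card_product]
    have h3 := Finset.card_filter_add_card_filter_not (s := Finset.univ) fun k => g (i, k) ∈ X
    rw [Finset.card_univ, Fintype.card_fin] at h3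
    exact Nat.mul_le_two_of_add_eq_three h3
  have hS : S.card ≤ 2 := card_filter_straddling_le_two σ hX
  calc _ ≤ (S.biUnion E).card := (Set.ncard_le_ncard hsub).trans_eq (Set.ncard_coe_finset _)
    _ ≤ S.card * 2 := Finset.card_biUnion_le_card_mul S E 2 hE
    _ ≤ 4 := by omega

end Crossing

theorem isClique_halfSquare_neighborSet_inter {V : Type*} (B : SimpleGraph V) (W : Set V) (s : V) :
    (halfSquare B W).IsClique (B.neighborSet s ∩ W) :=
  fun _ ha _ hb hab => ⟨hab, ha.2, hb.2, s, ha.1.symm, hb.1.symm⟩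

theorem stmt_13_general {V : Type*} {ι : Type*} {α : Type*} [Fintype V]
    (B : SimpleGraph V) (W U : Set V)
    (T : SimpleGraph ι) (r : ι) (hT : T.IsTree) (β : ι → Set V)
    (hD : IsTreeDecompOn B Set.univ T β)
    (s₀ : V)
    (x y z : α → V)
    (htri : ∀ i, x i ≠ y i ∧ y i ≠ z i ∧ x i ≠ z i ∧
      x i ∈ B.neighborSet s₀ ∧ y i ∈ B.neighborSet s₀ ∧ z i ∈ B.neighborSet s₀ ∧
      (halfSquare B W).Adj (x i) (y i) ∧ (halfSquare B W).Adj (y i) (z i) ∧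
      (halfSquare B W).Adj (x i) (z i))
    (hdisj : ∀ i j, i ≠ j → Disjoint ({x i, y i, z i} : Set V) {x j, y j, z j}) :
    ∃ x' y' z' : α → V,
      (∀ i, x' i ≠ y' i ∧ y' i ≠ z' i ∧ x' i ≠ z' i ∧
        x' i ∈ B.neighborSet s₀ ∧ y' i ∈ B.neighborSet s₀ ∧ z' i ∈ B.neighborSet s₀ ∧
        (halfSquare B W).Adj (x' i) (y' i) ∧ (halfSquare B W).Adj (y' i) (z' i) ∧
        (halfSquare B W).Adj (x' i) (z' i)) ∧
      (∀ i j, i ≠ j → Disjoint ({x' i, y' i, z' i} : Set V) {x' j, y' j, z' j}) ∧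
      (⋃ i, ({x' i, y' i, z' i} : Set V)) = (⋃ i, ({x i, y i, z i} : Set V)) ∧
      ∀ t : ι,
        {e | e ∈ (⋃ i, ({s(x' i, y' i), s(y' i, z' i), s(x' i, z' i)} : Set (Sym2 V))) ∧
          ∃ p q, e = s(p, q) ∧ p ∈ fakeSet B W U T r β t ∩ B.neighborSet s₀ ∧
            q ∈ W \ gammaSet T r (derivedBag B W U T r β) t}.ncard ≤ 4 := by
  classical
  set g := tripleMap x y z
  have hg : Injective g :=
    tripleMap_injective (fun i => ⟨(htri i).1, (htri i).2.1, (htri i).2.2.1⟩) hdisj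
  have hgK : Set.range g ⊆ B.neighborSet s₀ ∩ W := range_tripleMap_subset fun i =>
    let ⟨_, _, _, hx, hy, hz, hxy, hyz, _⟩ := htri i
    ⟨⟨hx, hxy.2.1⟩, ⟨hy, hxy.2.2.1⟩, ⟨hz, hyz.2.2.1⟩⟩
  have : Fintype α := Fintype.ofInjective (fun i => g (i, 0)) fun i j h => congrArg Prod.fst (hg h)
  obtain ⟨π, hπ⟩ := ((isLaminar_gammaSet_diff (r := r) hT fun v => hD.conn v trivial).preimage
    g).exists_perm_isIntervalBy_slotIndex (Fintype.equivFin α)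
  set x' := fun i => g (π (i, 0))
  set y' := fun i => g (π (i, 1))
  set z' := fun i => g (π (i, 2))
  have hg' : tripleMap x' y' z' = g ∘ π := tripleMap_eta (g ∘ π)
  have hrange : Set.range (tripleMap x' y' z') = Set.range g := by
    rw [hg', EquivLike.range_comp]
  have hinj : Injective (tripleMap x' y' z') := hg' ▸ hg.comp π.injective
  refine ⟨x', y', z', triangle_of_tripleMap_injective hinj
      (hrange ▸ hgK.trans Set.inter_subset_left)
      (hrange ▸ (isClique_halfSquare_neighborSet_inter B W s₀).subset hgK),
    disjoint_of_tripleMap_injective hinj, by rw [← range_tripleMap, ← range_tripleMap, hrange],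
    fun t => ?_⟩
  refine (Set.ncard_le_ncard ?_ (Set.toFinite _)).trans
    (ncard_crossing_le_four (Fintype.equivFin α) (x := x') (y := y') (z := z')
      (X := gammaSet T r β t \ β t) ?_)
  · rintro _ ⟨he, p, q, rfl, ⟨hp, -⟩, hq⟩
    exact ⟨he, p, q, rfl, mem_gammaSet_diff_of_mem_fakeSet hp,
      fun h => hq.2 (gammaSet_inter_subset_gammaSet_derivedBag B W U ⟨h.1, hq.1⟩)⟩
  · rw [hg']
    exact hπ _ ⟨_, ⟨t, rfl⟩, rfl⟩

/-- a family of pairwise vertex-disjoint triangles of `G` inside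
one special clique `K = N_B(s₀)` can be rearranged, keeping the number of
triangles and the vertex set, so that for every node `t` at most 4 of its edges
have one endpoint in `Fake(t) ∩ K` and the other in `V(G) ∖ γ_{D'}(t)`. -/
theorem stmt_13 {V : Type*} {ι : Type*} {α : Type*} [Fintype V]
    (B : SimpleGraph V) (W U : Set V) (hbip : IsBipartition B W U)
    (T : SimpleGraph ι) (r : ι) (hT : T.IsTree) (β : ι → Set V)
    (hD : IsTreeDecompOn B Set.univ T β) (hnice : IsNice T r β)
    (s₀ : V) (hs₀ : s₀ ∈ U)
    (x y z : α → V)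
    (htri : ∀ i, x i ≠ y i ∧ y i ≠ z i ∧ x i ≠ z i ∧
      x i ∈ B.neighborSet s₀ ∧ y i ∈ B.neighborSet s₀ ∧ z i ∈ B.neighborSet s₀ ∧
      (halfSquare B W).Adj (x i) (y i) ∧ (halfSquare B W).Adj (y i) (z i) ∧
      (halfSquare B W).Adj (x i) (z i))
    (hdisj : ∀ i j, i ≠ j → Disjoint ({x i, y i, z i} : Set V) {x j, y j, z j}) :
    ∃ x' y' z' : α → V,
      (∀ i, x' i ≠ y' i ∧ y' i ≠ z' i ∧ x' i ≠ z' i ∧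
        x' i ∈ B.neighborSet s₀ ∧ y' i ∈ B.neighborSet s₀ ∧ z' i ∈ B.neighborSet s₀ ∧
        (halfSquare B W).Adj (x' i) (y' i) ∧ (halfSquare B W).Adj (y' i) (z' i) ∧
        (halfSquare B W).Adj (x' i) (z' i)) ∧
      (∀ i j, i ≠ j → Disjoint ({x' i, y' i, z' i} : Set V) {x' j, y' j, z' j}) ∧
      (⋃ i, ({x' i, y' i, z' i} : Set V)) = (⋃ i, ({x i, y i, z i} : Set V)) ∧
      ∀ t : ι,
        {e | e ∈ (⋃ i, ({s(x' i, y' i), s(y' i, z' i), s(x' i, z' i)} : Set (Sym2 V))) ∧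
          ∃ p q, e = s(p, q) ∧ p ∈ fakeSet B W U T r β t ∩ B.neighborSet s₀ ∧
            q ∈ W \ gammaSet T r (derivedBag B W U T r β) t}.ncard ≤ 4 :=
  stmt_13_general B W U T r hT β hD s₀ x y z htri hdisj
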